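/- arXiv:2404.09004 — 7 statements merged into one kernel-verified Lean document; each statement's English description precedes it below -/
import Mathlib

section
/- There exists a family {b_α : α < 𝔟} of increasing functions in ω^ω that is unbounded with respect to ≤* such that the ranges b_α(ω) are pairwise almost disjoint and b_α ≤* b_β whenever α < β. -/
open Cardinal Set Filter Topology TopologicalSpace

/-- `A` is almost contained in `B`. -/
def almSub (A B : Set ℕ) : Prop := (A \ B).Finite

/-- `f ≤* g`: eventual domination. -/
def evLE (f g : ℕ → ℕ) : Prop := {n : ℕ | g n < f n}.Finite

/-- A splitting family on `ω`. -/
def IsSplittingFamily (S : Set (Set ℕ)) : Prop :=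
  ∀ A : Set ℕ, A.Infinite → ∃ s ∈ S, (A ∩ s).Infinite ∧ (A \ s).Infinite

/-- The splitting number `𝔰`. -/
noncomputable def sNum : Cardinal :=
  sInf {c | ∃ S : Set (Set ℕ), IsSplittingFamily S ∧ #S = c}

/-- An `≤*`-unbounded family. -/
def IsUnboundedFamily (F : Set (ℕ → ℕ)) : Prop :=
  ∀ g : ℕ → ℕ, ∃ f ∈ F, ¬ evLE f g

/-- The bounding number `𝔟`. -/
noncomputable def bNum : Cardinal :=
  sInf {c | ∃ F : Set (ℕ → ℕ), IsUnboundedFamily F ∧ #F = c}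

/-- The weight of a topological space. -/
noncomputable def wt (X : Type*) [TopologicalSpace X] : Cardinal :=
  sInf {c | ∃ B : Set (Set X), IsTopologicalBasis B ∧ #B = c}

/-- Zero-dimensional: there is a base of clopen sets. -/
def ZeroDim (X : Type*) [TopologicalSpace X] : Prop :=
  ∃ B : Set (Set X), IsTopologicalBasis B ∧ ∀ s ∈ B, IsClopen s

/-- Countably compact in the sense of the paper: every closed discrete subset is finite. -/
def CtblCompact (X : Type*) [TopologicalSpace X] : Prop :=
  ∀ A : Set X, IsClosed A → DiscreteTopology A → A.Finite

/-- Feebly compact: every locally finite family of nonempty open sets is finite. -/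
def FeeblyCompact (X : Type*) [TopologicalSpace X] : Prop :=
  ∀ F : Set (Set X), (∀ u ∈ F, IsOpen u ∧ u.Nonempty) →
    LocallyFinite (fun u : F => (u : Set X)) → F.Finite

/-- Pseudocompact: Tychonoff and every continuous real-valued function is bounded. -/
def Pseudocompact (X : Type*) [TopologicalSpace X] : Prop :=
  T35Space X ∧ ∀ f : X → ℝ, Continuous f → ∃ M : ℝ, ∀ x, |f x| ≤ M

/-- Pseudonormal space. -/
def Pseudonormal (X : Type*) [TopologicalSpace X] : Prop :=
  ∀ F₀ F₁ : Set X, IsClosed F₀ → IsClosed F₁ → F₀.Countable → Disjoint F₀ F₁ →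
    ∃ U₀ U₁ : Set X, IsOpen U₀ ∧ IsOpen U₁ ∧ F₀ ⊆ U₀ ∧ F₁ ⊆ U₁ ∧ Disjoint U₀ U₁

/-- The Pixley–Roy topology on the finite subsets of `X`. -/
def PRtop (X : Type*) [TopologicalSpace X] : TopologicalSpace (Finset X) :=
  TopologicalSpace.generateFrom
    {t | ∃ (F : Finset X) (U : Set X), IsOpen U ∧
      t = {A : Finset X | F ⊆ A ∧ (A : Set X) ⊆ U}}

/-- A subspace of the Cantor space is a λ-set if each of its countable subsets is Gδ in it. -/
def IsLambdaSet (X : Set (ℕ → Bool)) : Prop :=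
  ∀ C : Set X, C.Countable → IsGδ C

/-!
Fewer than `𝔟` functions always have a common `≤*`-bound. So, enumerating an unbounded family
`{f_α : α < 𝔟}`, one can choose by transfinite recursion `m_α` pointwise above `f_α` and eventually
strictly above every earlier `b_β`, and put `b_α n = ⟨n, m_α n⟩` (Cantor pairing). Then `b_α(n)`
lies in the `n`-th column of `ω ≅ ω × ω`, so two ranges meet only where `m_α` and `m_β` agree,
which happens finitely often; making `m_α (n+1)` exceed `b_α n` makes `b_α` strictly increasing.
-/

lemma evLE_iff_eventually_le {f g : ℕ → ℕ} : evLE f g ↔ ∀ᶠ n in cofinite, f n ≤ g n := by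
  simp only [evLE, eventually_cofinite, not_le]

lemma evLE.mono_left {f f' g : ℕ → ℕ} (hf : f' ≤ f) (h : evLE f g) : evLE f' g :=
  evLE_iff_eventually_le.2 <| (evLE_iff_eventually_le.1 h).mono fun n hn => (hf n).trans hn

lemma isUnboundedFamily_univ : IsUnboundedFamily univ := fun g =>
  ⟨g + 1, mem_univ _, fun h => infinite_univ (by simpa [evLE] using h)⟩

lemma IsUnboundedFamily.range_of_le {ι : Type*} {f b : ι → ℕ → ℕ}
    (hf : IsUnboundedFamily (range f)) (hle : ∀ i, f i ≤ b i) : IsUnboundedFamily (range b) := by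
  intro g
  obtain ⟨_, ⟨i, rfl⟩, hi⟩ := hf g
  exact ⟨b i, mem_range_self i, fun h => hi (h.mono_left (hle i))⟩

lemma exists_isUnboundedFamily_mk_eq_bNum : ∃ F, IsUnboundedFamily F ∧ #F = bNum :=
  csInf_mem (s := {c | ∃ F : Set (ℕ → ℕ), IsUnboundedFamily F ∧ #F = c})
    ⟨_, univ, isUnboundedFamily_univ, rfl⟩

lemma exists_evLE_of_mk_lt_bNum {ι : Type} (p : ι → ℕ → ℕ) (h : #ι < bNum) :
    ∃ g, ∀ i, evLE (p i) g := by
  by_contra! hp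
  have hunb : IsUnboundedFamily (range p) := fun g =>
    let ⟨i, hi⟩ := hp g
    ⟨p i, mem_range_self i, hi⟩
  have hb : bNum ≤ #(range p) := csInf_le' ⟨range p, hunb, rfl⟩
  exact (hb.trans mk_range_le).not_gt h

noncomputable def upperBound {ι : Type} (p : ι → ℕ → ℕ) : ℕ → ℕ :=
  Classical.epsilon fun g => ∀ i, evLE (p i) g

lemma evLE_upperBound {ι : Type} {p : ι → ℕ → ℕ} (h : #ι < bNum) (i : ι) :
    evLE (p i) (upperBound p) :=
  Classical.epsilon_spec (exists_evLE_of_mk_lt_bNum p h) i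

section GraphCode

def graphCode (m : ℕ → ℕ) (n : ℕ) : ℕ := Nat.pair n (m n)

variable {m m' : ℕ → ℕ}

lemma le_graphCode (n : ℕ) : m n ≤ graphCode m n := Nat.right_le_pair _ _

lemma graphCode_eq_graphCode_iff {n k : ℕ} :
    graphCode m n = graphCode m' k ↔ n = k ∧ m n = m' k :=
  Nat.pair_eq_pair

lemma finite_range_inter_range_graphCode (h : ∀ᶠ n in cofinite, m n ≠ m' n) :
    (range (graphCode m) ∩ range (graphCode m')).Finite := by
  refine ((eventually_cofinite.1 h).image (graphCode m)).subset ?_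
  rintro _ ⟨⟨n, rfl⟩, ⟨k, hk⟩⟩
  obtain ⟨rfl, hnk⟩ := graphCode_eq_graphCode_iff.1 hk
  exact ⟨_, not_not.2 hnk.symm, rfl⟩

lemma evLE_graphCode (h : ∀ᶠ n in cofinite, m n ≤ m' n) : evLE (graphCode m) (graphCode m') :=
  evLE_iff_eventually_le.2 <| h.mono fun n hn =>
    (StrictMono.monotone fun _ _ => Nat.pair_lt_pair_right n) hn

def staircase (h : ℕ → ℕ) : ℕ → ℕ
  | 0 => h 0
  | n + 1 => h (n + 1) + Nat.pair n (staircase h n) + 1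

lemma le_staircase (h : ℕ → ℕ) (n : ℕ) : h n ≤ staircase h n := by
  cases n <;> simp only [staircase] <;> omega

lemma strictMono_graphCode_staircase (h : ℕ → ℕ) : StrictMono (graphCode (staircase h)) :=
  strictMono_nat_of_lt_succ fun n =>
    calc graphCode (staircase h) n < staircase h (n + 1) := by
          simp only [staircase, graphCode]; omega
      _ ≤ graphCode (staircase h) (n + 1) := le_graphCode _

end GraphCode

section Scale

variable {ι : Type} [LinearOrder ι] [WellFoundedLT ι]

noncomputable def scale (f : ι → ℕ → ℕ) : ι → ℕ → ℕ :=
  wellFounded_lt.fix fun i prev =>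
    staircase fun n => upperBound (fun j : Iio i => graphCode (prev j j.2)) n + f i n + 1

variable (f : ι → ℕ → ℕ)

lemma scale_eq (i : ι) :
    scale f i =
      staircase fun n => upperBound (fun j : Iio i => graphCode (scale f j)) n + f i n + 1 := by
  rw [scale, WellFounded.fix_eq]

lemma upperBound_add_lt_scale (i : ι) (n : ℕ) :
    upperBound (fun j : Iio i => graphCode (scale f j)) n + f i n < scale f i n := by
  rw [scale_eq f i]
  exact le_staircase (fun n => upperBound (fun j : Iio i => graphCode (scale f j)) n + f i n + 1) n

lemma le_scale (i : ι) : f i ≤ scale f i := fun n =>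
  ((Nat.le_add_left _ _).trans_lt (upperBound_add_lt_scale f i n)).le

lemma eventually_graphCode_lt_scale (hι : ∀ i : ι, #(Iio i) < bNum) {i j : ι} (hji : j < i) :
    ∀ᶠ n in cofinite, graphCode (scale f j) n < scale f i n := by
  filter_upwards [evLE_iff_eventually_le.1
    (evLE_upperBound (p := fun j : Iio i => graphCode (scale f j)) (hι i) ⟨j, hji⟩)] with n hn
  exact hn.trans_lt ((Nat.le_add_right _ _).trans_lt (upperBound_add_lt_scale f i n))

lemma eventually_scale_lt_scale (hι : ∀ i : ι, #(Iio i) < bNum) {i j : ι} (hji : j < i) :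
    ∀ᶠ n in cofinite, scale f j n < scale f i n :=
  (eventually_graphCode_lt_scale f hι hji).mono fun n hn => (le_graphCode n).trans_lt hn

theorem exists_almostDisjoint_scale_above (hι : ∀ i : ι, #(Iio i) < bNum) :
    ∃ b : ι → ℕ → ℕ, (∀ i, StrictMono (b i)) ∧ (∀ i, f i ≤ b i) ∧
      (∀ i j, i ≠ j → (range (b i) ∩ range (b j)).Finite) ∧ ∀ i j, i < j → evLE (b i) (b j) := by
  refine ⟨fun i => graphCode (scale f i), fun i => ?_, fun i n => ?_, fun i j hij => ?_,
    fun i j hij => evLE_graphCode ((eventually_scale_lt_scale f hι hij).mono fun _ => le_of_lt)⟩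
  · change StrictMono (graphCode (scale f i))
    rw [scale_eq f i]
    exact strictMono_graphCode_staircase _
  · exact (le_scale f i n).trans (le_graphCode n)
  · refine finite_range_inter_range_graphCode ?_
    rcases hij.lt_or_gt with h | h
    · exact (eventually_scale_lt_scale f hι h).mono fun _ => ne_of_lt
    · exact (eventually_scale_lt_scale f hι h).mono fun _ => ne_of_gt

end Scale

/-- an unbounded `≤*`-increasing `𝔟`-scale of strictly increasing functions
with pairwise almost disjoint ranges. -/
theorem stmt_2 :
    ∃ b : {α : Ordinal // α < bNum.ord} → (ℕ → ℕ),
      (∀ α, StrictMono (b α)) ∧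
      IsUnboundedFamily (Set.range b) ∧
      (∀ α β, α ≠ β → (Set.range (b α) ∩ Set.range (b β)).Finite) ∧
      (∀ α β, α < β → evLE (b α) (b β)) := by
  obtain ⟨F, hF, hFcard⟩ := exists_isUnboundedFamily_mk_eq_bNum
  obtain ⟨e⟩ : Nonempty (bNum.ord.ToType ≃ F) := by
    rw [← Cardinal.eq, mk_toType, card_ord, hFcard]
  obtain ⟨b, hmono, hle, hdisj, hevLE⟩ :=
    exists_almostDisjoint_scale_above (fun i => (e i : ℕ → ℕ)) fun i => by simpa using mk_Iio_lt i
  let iso : {α : Ordinal // α < bNum.ord} ≃o bNum.ord.ToType := Ordinal.ToType.mk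
  refine ⟨fun α => b (iso α), fun α => hmono _, ?_, fun α β hαβ => hdisj _ _ ?_,
    fun α β hαβ => hevLE _ _ (iso.lt_iff_lt.2 hαβ)⟩
  · rw [show range (fun α => b (iso α)) = range b from iso.surjective.range_comp b]
    have hrange : range (fun i => (e i : ℕ → ℕ)) = F :=
      (e.surjective.range_comp _).trans Subtype.range_coe
    rw [← hrange] at hF
    exact hF.range_of_le hle
  · exact iso.injective.ne hαβ
end

section
/- There exists a regular, zero-dimensional, separable, first-countable, non-normal topological space of cardinality ω₁. -/
open Cardinal Set Filter Topology TopologicalSpace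

/-!
A Luzin family is an almost disjoint family `{A α : α < ω₁}` of infinite subsets of `ℕ` such
that for all `α` and `n` only finitely many `β < α` satisfy `A α ∩ A β ⊆ n`. It is built by
recursion: `A α` is a diagonal set `{x₀, x₁, …}` against an enumeration `D₀, D₁, …` of the
countably many earlier sets, with `xₖ ∈ Dₖ \ (D₀ ∪ … ∪ Dₖ₋₁)` and `xₖ ≥ k`.

The Ψ-space `ℕ ∪ ω₁` of an infinite almost disjoint family is zero-dimensional, T₁, separable
and first countable. For a Luzin family it is not normal: if open sets separated the closed
discrete sets `S` and `ω₁ \ S`, both uncountable, then for some `n` uncountably many `α ∈ S`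
would have `A α \ n` inside the first open set and uncountably many `β ∉ S` would have
`A β \ n` inside the second. An `α` of the first kind lying above infinitely many `β` of the
second kind then has `A α ∩ A β ⊆ n` for all of them.
-/

theorem ZeroDim.regularSpace {X : Type*} [TopologicalSpace X] (h : ZeroDim X) :
    RegularSpace X := by
  obtain ⟨B, hB, hBclopen⟩ := h
  refine .of_exists_mem_nhds_isClosed_subset fun x s hs => ?_
  obtain ⟨v, hvB, hxv, hvs⟩ := hB.mem_nhds_iff.1 hs
  exact ⟨v, (hBclopen v hvB).isOpen.mem_nhds hxv, (hBclopen v hvB).isClosed, hvs⟩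

theorem exists_not_countable_and_not_countable_compl (X : Type*) [Uncountable X] :
    ∃ S : Set X, ¬S.Countable ∧ ¬Sᶜ.Countable := by
  have hX : ℵ₀ ≤ #X := (aleph0_lt_mk_iff.2 ‹_›).le
  obtain ⟨e⟩ : Nonempty (X ≃ X ⊕ X) := Cardinal.eq.1 (by simp [add_eq_self hX])
  have key : ∀ f : X → X ⊕ X, f.Injective → ¬(e ⁻¹' range f).Countable := fun f hf h =>
    not_countable_univ (by simpa using (h.image e).preimage hf)
  refine ⟨e ⁻¹' range Sum.inl, key _ Sum.inl_injective, ?_⟩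
  rw [← preimage_compl, compl_range_inl]
  exact key _ Sum.inr_injective

theorem exists_mem_forall_lt_of_countable {ι : Type*} [LinearOrder ι]
    (hI : ∀ α : ι, (Iio α).Countable) {S c : Set ι} (hS : ¬S.Countable) (hc : c.Countable) : ∃ α ∈ S, ∀ x ∈ c, x < α := by
  have hIic : (⋃ x ∈ c, Iic x).Countable :=
    hc.biUnion fun x _ => Iio_insert (a := x) ▸ (hI x).insert x
  obtain ⟨α, hαS, hα⟩ := not_subset.1 fun hsub => hS (hIic.mono hsub)
  simp only [mem_iUnion, mem_Iic, not_exists, not_le] at hα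
  exact ⟨α, hαS, hα⟩

theorem exists_infinite_almostDisjoint_nat (D : ℕ → Set ℕ) (hD : ∀ i, (D i).Infinite)
    (hAD : Pairwise fun i j => (D i ∩ D j).Finite) :
    ∃ B : Set ℕ, B.Infinite ∧ (∀ i, (B ∩ D i).Finite) ∧ ∀ n, {i | B ∩ D i ⊆ Iio n}.Finite := by
  have hx : ∀ k, ∃ m ∈ D k, k ≤ m ∧ ∀ i < k, m ∉ D i := by
    intro k
    have hfin : ((⋃ i ∈ Iio k, D k ∩ D i) ∪ Iio k).Finite :=
      ((finite_Iio k).biUnion fun i hi => hAD (ne_of_gt hi)).union (finite_Iio k)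
    obtain ⟨m, hmD, hm⟩ := ((hD k).sdiff hfin).nonempty
    simp only [mem_union, mem_iUnion, mem_inter_iff, mem_Iio, not_or, not_exists,
      not_and, not_lt] at hm
    exact ⟨m, hmD, hm.2, fun i hi => hm.1 i hi hmD⟩
  choose x hxD hkx hxD' using hx
  refine ⟨range x, infinite_of_not_bddAbove ?_, fun i => ?_, fun n => ?_⟩
  · rintro ⟨b, hb⟩
    have := hkx (b + 1)
    have := hb ⟨b + 1, rfl⟩
    omega
  · refine ((finite_Iic i).image x).subset ?_
    rintro _ ⟨⟨k, rfl⟩, hk⟩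
    exact ⟨k, not_lt.1 fun hik => hxD' k i hik hk, rfl⟩
  · refine (finite_Iio n).subset fun i hi => ?_
    exact (hkx i).trans_lt (hi ⟨⟨i, rfl⟩, hxD i⟩)

theorem exists_infinite_almostDisjoint {κ : Type*} [Countable κ] [Infinite κ] (D : κ → Set ℕ)
    (hD : ∀ i, (D i).Infinite) (hAD : Pairwise fun i j => (D i ∩ D j).Finite) :
    ∃ B : Set ℕ, B.Infinite ∧ (∀ i, (B ∩ D i).Finite) ∧ ∀ n, {i | B ∩ D i ⊆ Iio n}.Finite := by
  obtain ⟨e⟩ : Nonempty (κ ≃ ℕ) := nonempty_equiv_of_countable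
  obtain ⟨B, hB, hBD, hBn⟩ := exists_infinite_almostDisjoint_nat (D ∘ e.symm)
    (fun i => hD _) fun i j hij => hAD (e.symm.injective.ne hij)
  refine ⟨B, hB, fun i => by simpa using hBD (e i), fun n => ?_⟩
  simpa using (hBn n).preimage e.injective.injOn

structure IsLuzinFamily {ι : Type*} [LT ι] (A : ι → Set ℕ) : Prop where
  infinite : ∀ α, (A α).Infinite
  almostDisjoint : Pairwise fun α β => (A α ∩ A β).Finite
  finite_lt : ∀ α n, {β | β < α ∧ A α ∩ A β ⊆ Iio n}.Finite

namespace Luzin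

def column (n : ℕ) : Set ℕ := range (Nat.pair n)

theorem column_infinite (n : ℕ) : (column n).Infinite :=
  infinite_range_of_injective fun _ _ h => (Nat.pair_eq_pair.1 h).2

theorem disjoint_column {n m : ℕ} (h : n ≠ m) : Disjoint (column n) (column m) := by
  rw [disjoint_left]
  rintro _ ⟨a, rfl⟩ ⟨b, hb⟩
  exact h (Nat.pair_eq_pair.1 hb).1.symm

/-- Almost disjointness from the columns makes the family extended at each stage infinite
(a finite almost disjoint family may cover `ℕ`). -/
structure IsExtension {ι : Type*} [Preorder ι] (α : ι) (A : ∀ β, β < α → Set ℕ) (B : Set ℕ) : Prop where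
  infinite : B.Infinite
  inter_column_finite : ∀ n, (B ∩ column n).Finite
  inter_finite : ∀ β (h : β < α), (B ∩ A β h).Finite
  finite_subset_Iio : ∀ n, {β : Iio α | B ∩ A β β.2 ⊆ Iio n}.Finite

end Luzin

open Luzin

section LuzinFamily

variable {ι : Type*} [LinearOrder ι] [WellFoundedLT ι]

noncomputable def luzinFamily : ι → Set ℕ :=
  wellFounded_lt.fix fun α A => Classical.epsilon (IsExtension α A)

theorem luzinFamily_eq (α : ι) :
    luzinFamily α = Classical.epsilon (IsExtension α fun β _ => luzinFamily β) :=
  wellFounded_lt.fix_eq _ α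

theorem isExtension_luzinFamily (hI : ∀ α : ι, (Iio α).Countable) (α : ι) :
    IsExtension α (fun β _ => luzinFamily β) (luzinFamily α) := by
  induction α using WellFoundedLT.induction with
  | _ α IH =>
  rw [luzinFamily_eq]
  refine Classical.epsilon_spec ?_
  have : Countable (Iio α) := (hI α).to_subtype
  let D : ℕ ⊕ Iio α → Set ℕ := Sum.elim column fun β => luzinFamily β.1
  have hD : ∀ i, (D i).Infinite := by
    rintro (n | β)
    exacts [column_infinite n, (IH β β.2).infinite]
  have hAD : Pairwise fun i j => (D i ∩ D j).Finite := by
    rintro (n | ⟨β, hβ⟩) (m | ⟨γ, hγ⟩) hne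
    · simp [D, (disjoint_column fun h => hne (congrArg Sum.inl h)).inter_eq]
    · simpa [D, inter_comm] using (IH γ hγ).inter_column_finite n
    · exact (IH β hβ).inter_column_finite m
    · rcases lt_or_gt_of_ne fun h : β = γ => hne (by simp [h]) with h | h
      · simpa [D, inter_comm] using (IH γ hγ).inter_finite β h
      · exact (IH β hβ).inter_finite γ h
  obtain ⟨B, hB, hBD, hBn⟩ := exists_infinite_almostDisjoint D hD hAD
  exact ⟨B, hB, fun n => hBD (.inl n), fun β hβ => hBD (.inr ⟨β, hβ⟩),
    fun n => (hBn n).preimage Sum.inr_injective.injOn⟩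

theorem isLuzinFamily_luzinFamily (hI : ∀ α : ι, (Iio α).Countable) :
    IsLuzinFamily (luzinFamily (ι := ι)) where
  infinite α := (isExtension_luzinFamily hI α).infinite
  almostDisjoint α β hne := by
    rcases lt_or_gt_of_ne hne with h | h
    · simpa [inter_comm] using (isExtension_luzinFamily hI β).inter_finite α h
    · exact (isExtension_luzinFamily hI α).inter_finite β h
  finite_lt α n := by
    refine (((isExtension_luzinFamily hI α).finite_subset_Iio n).image Subtype.val).subset ?_
    rintro β ⟨hβ, hsub⟩
    exact ⟨⟨β, hβ⟩, hsub, rfl⟩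

end LuzinFamily

theorem exists_forall_ge_not_countable_subset_Iio {ι : Type*} {S : Set ι} (hS : ¬S.Countable)
    {f : ι → Set ℕ} (hf : ∀ α ∈ S, (f α).Finite) :
    ∃ N, ∀ n ≥ N, ¬{α ∈ S | f α ⊆ Iio n}.Countable := by
  have hcover : S ⊆ ⋃ n, {α ∈ S | f α ⊆ Iio n} := by
    intro α hα
    obtain ⟨b, hb⟩ := (hf α hα).bddAbove
    simp only [mem_iUnion]
    exact ⟨b + 1, hα, fun x hx => Nat.lt_succ_of_le (hb hx)⟩
  obtain ⟨N, hN⟩ : ∃ N, ¬{α ∈ S | f α ⊆ Iio N}.Countable := by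
    by_contra! h
    exact hS ((countable_iUnion h).mono hcover)
  refine ⟨N, fun n hn h => hN (h.mono ?_)⟩
  exact fun α hα => ⟨hα.1, hα.2.trans (Iio_subset_Iio hn)⟩

theorem IsLuzinFamily.not_separated {ι : Type*} [LinearOrder ι] {A : ι → Set ℕ}
    (hA : IsLuzinFamily A) (hI : ∀ α : ι, (Iio α).Countable) {S T : Set ι}
    (hS : ¬S.Countable) (hT : ¬T.Countable) {P Q : Set ℕ} (hPQ : Disjoint P Q)
    (hP : ∀ α ∈ S, (A α \ P).Finite) (hQ : ∀ β ∈ T, (A β \ Q).Finite) : False := by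
  obtain ⟨N₁, hN₁⟩ := exists_forall_ge_not_countable_subset_Iio hS hP
  obtain ⟨N₂, hN₂⟩ := exists_forall_ge_not_countable_subset_Iio hT hQ
  set n := max N₁ N₂
  have hT' : {β ∈ T | A β \ Q ⊆ Iio n}.Infinite := fun h =>
    hN₂ n (le_max_right _ _) h.countable
  let β := hT'.natEmbedding
  obtain ⟨α, ⟨-, hαP⟩, hβα⟩ := exists_mem_forall_lt_of_countable hI
    (hN₁ n (le_max_left _ _)) (countable_range fun k => (β k : ι))
  have hsmall : ∀ k, A α ∩ A (β k) ⊆ Iio n := by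
    rintro k x ⟨hxα, hxβ⟩
    by_contra hxn
    have hxP : x ∈ P := not_not.1 fun hx => hxn (hαP ⟨hxα, hx⟩)
    have hxQ : x ∈ Q := not_not.1 fun hx => hxn ((β k).2.2 ⟨hxβ, hx⟩)
    exact hPQ.ne_of_mem hxP hxQ rfl
  refine (hA.finite_lt α n).not_infinite ?_
  exact infinite_of_injective_forall_mem (Subtype.val_injective.comp β.injective) fun k =>
    ⟨hβα _ ⟨k, rfl⟩, hsmall k⟩

/-- The Ψ-space of a family `A` of subsets of `ℕ`: the points `inl n` are isolated and the
neighbourhoods of `inr α` are the sets `{inr α} ∪ inl '' (A α \ F)` with `F` finite. -/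
inductive Psi {ι : Type*} (A : ι → Set ℕ) : Type _
  | inl (n : ℕ)
  | inr (α : ι)

namespace Psi

variable {ι : Type*} {A : ι → Set ℕ}

theorem inr_injective : Function.Injective (inr : ι → Psi A) := fun _ _ => inr.inj

def equivSum : Psi A ≃ ℕ ⊕ ι where
  toFun := fun | inl n => .inl n | inr α => .inr α
  invFun := Sum.elim inl inr
  left_inv := by rintro (_ | _) <;> rfl
  right_inv := by rintro (_ | _) <;> rfl

instance : TopologicalSpace (Psi A) where
  IsOpen U := ∀ α, inr α ∈ U → (A α \ inl ⁻¹' U).Finite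
  isOpen_univ α _ := by simp
  isOpen_inter U V hU hV α hα :=
    ((hU α hα.1).union (hV α hα.2)).subset fun x hx => by
      by_cases hxU : inl x ∈ U
      exacts [.inr ⟨hx.1, fun hxV => hx.2 ⟨hxU, hxV⟩⟩, .inl ⟨hx.1, hxU⟩]
  isOpen_sUnion 𝒰 h𝒰 α := by
    rintro ⟨U, hU𝒰, hαU⟩
    exact (h𝒰 U hU𝒰 α hαU).subset fun x hx => ⟨hx.1, fun hxU => hx.2 ⟨U, hU𝒰, hxU⟩⟩

theorem isClopen_singleton_inl (n : ℕ) : IsClopen ({inl n} : Set (Psi A)) := by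
  refine ⟨isOpen_compl_iff.1 fun α _ => (finite_singleton n).subset fun x hx => ?_,
    fun α hα => by simp at hα⟩
  by_contra hxn
  exact hx.2 fun h => hxn (by simpa using h)

theorem isClosed_image_inr (T : Set ι) : IsClosed (inr '' T : Set (Psi A)) :=
  isOpen_compl_iff.1 fun _ _ =>
    finite_empty.subset fun _ hx => hx.2 fun ⟨_, _, h⟩ => by cases h

instance : T1Space (Psi A) where
  t1 := by
    rintro (n | α)
    · exact (isClopen_singleton_inl n).isClosed
    · simpa using isClosed_image_inr (A := A) {α}

def basicNbhd (α : ι) (F : Finset ℕ) : Set (Psi A) :=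
  insert (inr α) (inl '' (A α \ F))

theorem inl_mem_basicNbhd {α : ι} {F : Finset ℕ} {n : ℕ} :
    inl n ∈ basicNbhd (A := A) α F ↔ n ∈ A α \ F := by
  simp [basicNbhd]

theorem inr_mem_basicNbhd {α β : ι} {F : Finset ℕ} :
    inr β ∈ basicNbhd (A := A) α F ↔ β = α := by
  simp [basicNbhd]

theorem isOpen_basicNbhd (α : ι) (F : Finset ℕ) : IsOpen (basicNbhd (A := A) α F) := by
  intro β hβ
  rw [inr_mem_basicNbhd.1 hβ]
  exact F.finite_toSet.subset fun x hx =>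
    not_not.1 fun hxF => hx.2 (inl_mem_basicNbhd.2 ⟨hx.1, hxF⟩)

theorem isClosed_basicNbhd (hA : Pairwise fun α β => (A α ∩ A β).Finite) (α : ι)
    (F : Finset ℕ) : IsClosed (basicNbhd (A := A) α F) := by
  refine isOpen_compl_iff.1 fun β hβ => ?_
  have hβα : β ≠ α := fun h => hβ (inr_mem_basicNbhd.2 h)
  exact (hA hβα).subset fun x hx => ⟨hx.1, (inl_mem_basicNbhd.1 (not_not.1 hx.2)).1⟩

theorem hasBasis_nhds_inr (α : ι) :
    (𝓝 (inr α : Psi A)).HasBasis (fun _ => True) (basicNbhd α) := by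
  refine ⟨fun t => ⟨fun ht => ?_, fun ⟨F, _, hFt⟩ =>
    mem_of_superset ((isOpen_basicNbhd α F).mem_nhds (mem_insert _ _)) hFt⟩⟩
  obtain ⟨U, hUt, hU, hαU⟩ := mem_nhds_iff.1 ht
  refine ⟨(hU α hαU).toFinset, trivial, (insert_subset hαU ?_).trans hUt⟩
  rintro _ ⟨n, hn, rfl⟩
  simp only [Finite.coe_toFinset, Set.mem_sdiff, mem_preimage, not_and, not_not] at hn
  exact hn.2 hn.1

theorem isTopologicalBasis :
    IsTopologicalBasis (range (fun n => {inl n}) ∪ range fun p : ι × Finset ℕ =>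
      basicNbhd (A := A) p.1 p.2) := by
  refine isTopologicalBasis_of_isOpen_of_nhds ?_ fun x U hxU hU => ?_
  · rintro _ (⟨n, rfl⟩ | ⟨⟨α, F⟩, rfl⟩)
    exacts [(isClopen_singleton_inl n).isOpen, isOpen_basicNbhd α F]
  rcases x with n | α
  · exact ⟨{inl n}, .inl ⟨n, rfl⟩, rfl, singleton_subset_iff.2 hxU⟩
  · obtain ⟨F, -, hFU⟩ := (hasBasis_nhds_inr α).mem_iff.1 (hU.mem_nhds hxU)
    exact ⟨basicNbhd α F, .inr ⟨(α, F), rfl⟩, mem_insert _ _, hFU⟩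

theorem zeroDim (hA : Pairwise fun α β => (A α ∩ A β).Finite) : ZeroDim (Psi A) := by
  refine ⟨_, isTopologicalBasis, ?_⟩
  rintro _ (⟨n, rfl⟩ | ⟨⟨α, F⟩, rfl⟩)
  exacts [isClopen_singleton_inl n, ⟨isClosed_basicNbhd hA α F, isOpen_basicNbhd α F⟩]

theorem t3Space (hA : Pairwise fun α β => (A α ∩ A β).Finite) : T3Space (Psi A) :=
  have := (zeroDim hA).regularSpace
  inferInstance

theorem separableSpace (hA : ∀ α, (A α).Infinite) : SeparableSpace (Psi A) := by
  refine ⟨⟨range inl, countable_range _, fun x => ?_⟩⟩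
  rcases x with n | α
  · exact subset_closure ⟨n, rfl⟩
  · refine (mem_closure_iff_nhds_basis (hasBasis_nhds_inr α)).2 fun F _ => ?_
    obtain ⟨m, hm⟩ := ((hA α).sdiff F.finite_toSet).nonempty
    exact ⟨inl m, ⟨m, rfl⟩, inl_mem_basicNbhd.2 hm⟩

instance : FirstCountableTopology (Psi A) where
  nhds_generated_countable := by
    rintro (n | α)
    · rw [(isOpen_singleton_iff_nhds_eq_pure _).1 (isClopen_singleton_inl n).isOpen]
      exact isCountablyGenerated_pure _
    · exact (hasBasis_nhds_inr α).isCountablyGenerated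

theorem not_normalSpace [LinearOrder ι] (hA : IsLuzinFamily A)
    (hI : ∀ α : ι, (Iio α).Countable) {S : Set ι} (hS : ¬S.Countable) (hSc : ¬Sᶜ.Countable) :
    ¬NormalSpace (Psi A) := by
  intro hN
  obtain ⟨U, V, hU, hV, hSU, hSV, hUV⟩ := hN.normal _ _ (isClosed_image_inr S)
    (isClosed_image_inr Sᶜ) ((disjoint_image_iff inr_injective).2 disjoint_compl_right)
  exact hA.not_separated hI hS hSc (hUV.preimage inl)
    (fun α hα => hU α (hSU ⟨α, hα, rfl⟩)) fun β hβ => hV β (hSV ⟨β, hβ, rfl⟩)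

end Psi

theorem countable_Iio_aleph_one_ord (α : (aleph 1).ord.ToType) : (Iio α).Countable :=
  le_aleph0_iff_set_countable.1 <| lt_aleph_one_iff.1 <| by
    simpa using mk_Iio_lt α (by simp)

/-- there is a regular zero-dimensional separable first-countable
non-normal space of cardinality `ω₁`. -/
theorem stmt_5 :
    ∃ (X : Type) (_ : TopologicalSpace X),
      T3Space X ∧ ZeroDim X ∧ SeparableSpace X ∧ FirstCountableTopology X ∧
      ¬ NormalSpace X ∧ #X = aleph 1 := by
  let ι := (aleph 1).ord.ToType
  have : Uncountable ι := aleph0_lt_mk_iff.1 (by simp [ι])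
  have hA := isLuzinFamily_luzinFamily countable_Iio_aleph_one_ord
  obtain ⟨S, hS, hSc⟩ := exists_not_countable_and_not_countable_compl ι
  refine ⟨Psi (luzinFamily (ι := ι)), inferInstance,
    Psi.t3Space hA.almostDisjoint, Psi.zeroDim hA.almostDisjoint,
    Psi.separableSpace hA.infinite, inferInstance,
    Psi.not_normalSpace hA countable_Iio_aleph_one_ord hS hSc, ?_⟩
  rw [Psi.equivSum.cardinal_eq, mk_sum, mk_nat, lift_id, lift_id, mk_ord_toType]
  exact add_eq_right (aleph0_le_aleph 1) aleph0_lt_aleph_one.le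
end

section
/- Let X be a first-countable zero-dimensional Hausdorff space with a clopen base 𝓑 of cardinality strictly less than min{𝔰, 𝔟}. Then for every locally finite sequence T = {T_n : n ∈ ω} of elements of 𝓑 there exists a 𝓑-exact sequence S ∈ E(𝓑) that refines T. -/
open Cardinal Set Filter Topology TopologicalSpace

lemma exists_unsplit {ι : Type} (F : ι → Set ℕ) (h : #ι < sNum) :
    ∃ A : Set ℕ, A.Infinite ∧ ∀ i, (A ∩ F i).Finite ∨ (A \ F i).Finite := by
  by_contra hcon
  push_neg at hcon
  have hsplit : IsSplittingFamily (Set.range F) := by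
    intro A hA
    obtain ⟨i, hi⟩ := hcon A hA
    exact ⟨F i, Set.mem_range_self i, hi.1, hi.2⟩
  have h1 : sNum ≤ #(Set.range F) := csInf_le' ⟨Set.range F, hsplit, rfl⟩
  exact absurd (h1.trans Cardinal.mk_range_le) (not_le.mpr h)

lemma exists_bound {ι : Type} (F : ι → ℕ → ℕ) (h : #ι < bNum) :
    ∃ g : ℕ → ℕ, ∀ i, evLE (F i) g := by
  by_contra hcon
  push_neg at hcon
  have hub : IsUnboundedFamily (Set.range F) := by
    intro g
    obtain ⟨i, hi⟩ := hcon g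
    exact ⟨F i, Set.mem_range_self i, hi⟩
  have h1 : bNum ≤ #(Set.range F) := csInf_le' ⟨Set.range F, hub, rfl⟩
  exact absurd (h1.trans Cardinal.mk_range_le) (not_le.mpr h)

lemma localBase {X : Type} [TopologicalSpace X] [FirstCountableTopology X]
    {𝓑 : Set (Set X)} (hbasis : IsTopologicalBasis 𝓑)
    {x : X} {W : Set X} (hWo : IsOpen W) (hx : x ∈ W) :
    ∃ b : ℕ → Set X, (∀ k, b k ∈ 𝓑) ∧ (∀ k, x ∈ b k) ∧ (∀ k, b (k+1) ⊆ b k) ∧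
      b 0 ⊆ W ∧ ∀ U : Set X, IsOpen U → x ∈ U → ∃ k, b k ⊆ U := by
  classical
  obtain ⟨u, hu⟩ := (𝓝 x).exists_antitone_basis
  have hO : ∀ k : ℕ, ∃ O : Set X, O ⊆ u k ∧ IsOpen O ∧ x ∈ O := by
    intro k
    exact mem_nhds_iff.mp (hu.toHasBasis.mem_of_mem trivial)
  choose O hOsub hOopen hOx using hO
  have step : ∀ (k : ℕ) (s : Set X), IsOpen s → x ∈ s →
      ∃ t, t ∈ 𝓑 ∧ x ∈ t ∧ t ⊆ s ∩ O k := by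
    intro k s hs hxs
    exact hbasis.exists_subset_of_mem_open ⟨hxs, hOx k⟩ (hs.inter (hOopen k))
  let Fstep : ℕ → Set X → Set X := fun k s =>
    if h : IsOpen s ∧ x ∈ s then (step k s h.1 h.2).choose else ∅
  obtain ⟨t0, ht0, hxt0, ht0sub⟩ := step 0 W hWo hx
  let b : ℕ → Set X := fun k => Nat.rec t0 (fun k s => Fstep (k+1) s) k
  have hbsucc : ∀ k, b (k+1) = Fstep (k+1) (b k) := fun k => rfl
  have key : ∀ k, b k ∈ 𝓑 ∧ x ∈ b k ∧ b k ⊆ O k ∧ (∀ j, k = j + 1 → b k ⊆ b j) := by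
    intro k
    induction k with
    | zero => exact ⟨ht0, hxt0, fun y hy => (ht0sub hy).2, fun j hj => by omega⟩
    | succ k ih =>
      have hopen : IsOpen (b k) := hbasis.isOpen ih.1
      have hcond : IsOpen (b k) ∧ x ∈ b k := ⟨hopen, ih.2.1⟩
      have heq : b (k+1) = (step (k+1) (b k) hcond.1 hcond.2).choose := by
        rw [hbsucc]; simp only [Fstep, dif_pos hcond]
      obtain ⟨h1, h2, h3⟩ := (step (k+1) (b k) hcond.1 hcond.2).choose_spec
      rw [heq]
      refine ⟨h1, h2, fun y hy => (h3 hy).2, fun j hj => ?_⟩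
      have : j = k := by omega
      subst this
      exact fun y hy => (h3 hy).1
  refine ⟨b, fun k => (key k).1, fun k => (key k).2.1,
    fun k => (key (k+1)).2.2.2 k rfl, fun y hy => (ht0sub hy).1, ?_⟩
  intro U hU hxU
  obtain ⟨k, -, hk⟩ := hu.toHasBasis.mem_iff.mp (hU.mem_nhds hxU)
  exact ⟨k, fun y hy => hk (hOsub k ((key k).2.2.1 hy))⟩

lemma finite_bound {s : Set ℕ} (h : s.Finite) : ∃ N, ∀ n ≥ N, n ∉ s := by
  obtain ⟨N, hN⟩ := h.bddAbove
  exact ⟨N + 1, fun n hn hns => by have := hN hns; omega⟩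

/-- in a first-countable zero-dimensional Hausdorff space with a clopen
base `𝓑` of size `< min {𝔰, 𝔟}`, every locally finite sequence from `𝓑` admits a
`𝓑`-exact locally finite refinement from `𝓑`. -/
theorem stmt_7 (X : Type) [TopologicalSpace X] [T2Space X]
    [FirstCountableTopology X] (𝓑 : Set (Set X))
    (hbasis : IsTopologicalBasis 𝓑) (hclopen : ∀ B ∈ 𝓑, IsClopen B)
    (hcard : #𝓑 < min sNum bNum)
    (T : ℕ → Set X) (hT : ∀ n, T n ∈ 𝓑) (hTlf : LocallyFinite T) :
    ∃ S : ℕ → Set X, (∀ n, S n ∈ 𝓑) ∧ LocallyFinite S ∧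
      (∀ B ∈ 𝓑, {n : ℕ | (S n ∩ B).Nonempty}.Infinite →
        ∃ k : ℕ, ∀ n ≥ k, S n ⊆ B) ∧
      ∃ f : ℕ → ℕ, Function.Injective f ∧ ∀ n, S n ⊆ T (f n) := by
  classical
  rw [lt_min_iff] at hcard
  by_cases hne : ∀ n, (T n).Nonempty
  case neg =>
    push_neg at hne
    obtain ⟨n₀, hn₀⟩ := hne
    refine ⟨fun _ => ∅, fun _ => hn₀ ▸ hT n₀, ?_, ?_, id, fun a b h => h,
      fun n => Set.empty_subset _⟩
    · intro y
      exact ⟨Set.univ, Filter.univ_mem, by simp⟩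
    · intro B _ hinf
      exfalso
      apply hinf
      convert Set.finite_empty
      ext n
      simp
  case pos =>
    choose x hx using hne
    have hb : ∀ n, ∃ b : ℕ → Set X, (∀ k, b k ∈ 𝓑) ∧ (∀ k, x n ∈ b k) ∧
        (∀ k, b (k+1) ⊆ b k) ∧ b 0 ⊆ T n ∧
        ∀ U : Set X, IsOpen U → x n ∈ U → ∃ k, b k ⊆ U :=
      fun n => localBase hbasis (hclopen _ (hT n)).2 (hx n)
    choose b hb𝓑 hbx hbsucc hb0 hbU using hb
    have hbanti : ∀ n, Antitone (b n) := fun n => antitone_nat_of_succ_le (hbsucc n)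
    have hbT : ∀ n k, b n k ⊆ T n := fun n k => (hbanti n (Nat.zero_le k)).trans (hb0 n)
    -- the functions g_B
    have hGex : ∀ B : ↥𝓑, ∀ n : ℕ, ∃ k : ℕ,
        (x n ∈ (B : Set X) → b n k ⊆ (B : Set X)) ∧
        (x n ∉ (B : Set X) → b n k ∩ (B : Set X) = ∅) := by
      intro B n
      by_cases hxB : x n ∈ (B : Set X)
      · obtain ⟨k, hk⟩ := hbU n (B : Set X) (hclopen _ B.2).2 hxB
        exact ⟨k, fun _ => hk, fun h => absurd hxB h⟩
      · obtain ⟨k, hk⟩ := hbU n ((B : Set X)ᶜ) (hclopen _ B.2).1.isOpen_compl hxB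
        refine ⟨k, fun h => absurd h hxB, fun _ => ?_⟩
        rw [Set.eq_empty_iff_forall_notMem]
        exact fun y hy => hk hy.1 hy.2
    choose G hG1 hG2 using hGex
    -- dominating function
    obtain ⟨g, hg⟩ : ∃ g : ℕ → ℕ, ∀ B : ↥𝓑, evLE (G B) g :=
      exists_bound G (lt_of_le_of_lt le_rfl hcard.2)
    -- unsplit infinite set
    obtain ⟨A, hAinf, hA⟩ := exists_unsplit (fun B : ↥𝓑 => {n : ℕ | x n ∈ (B : Set X)})
      (lt_of_le_of_lt le_rfl hcard.1)
    haveI : Infinite ↥A := hAinf.to_subtype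
    let e := Nat.orderEmbeddingOfSet A
    have heA : ∀ m, e m ∈ A := by
      intro m
      have := Nat.orderEmbeddingOfSet_range (s := A)
      rw [← this]
      exact Set.mem_range_self m
    have hem : ∀ m : ℕ, m ≤ e m := fun m => e.strictMono.le_apply
    refine ⟨fun m => b (e m) (g (e m)), fun m => hb𝓑 _ _, ?_, ?_,
      e, e.injective, fun m => hbT _ _⟩
    · -- locally finite
      intro y
      obtain ⟨t, ht, hfin⟩ := hTlf y
      refine ⟨t, ht, ?_⟩
      have hsub : {m : ℕ | (b (e m) (g (e m)) ∩ t).Nonempty} ⊆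
          (⇑e) ⁻¹' {n : ℕ | (T n ∩ t).Nonempty} := by
        intro m hm
        obtain ⟨z, hz1, hz2⟩ := hm
        exact ⟨z, hbT _ _ hz1, hz2⟩
      exact (hfin.preimage e.injective.injOn).subset hsub
    · -- exactness
      intro B hB hinf
      set B' : ↥𝓑 := ⟨B, hB⟩ with hB'
      obtain ⟨N, hN⟩ := finite_bound (hg B')
      have hdom : ∀ n ≥ N, G B' n ≤ g n := by
        intro n hn
        have := hN n hn
        simp only [Set.mem_setOf_eq, not_lt] at this
        exact this
      have hgood : ∀ n ≥ N, (x n ∈ B → b n (g n) ⊆ B) ∧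
          (x n ∉ B → b n (g n) ∩ B = ∅) := by
        intro n hn
        have hmono : b n (g n) ⊆ b n (G B' n) := hbanti n (hdom n hn)
        constructor
        · intro hxB
          exact hmono.trans (hG1 B' n hxB)
        · intro hxB
          rw [Set.eq_empty_iff_forall_notMem]
          intro y hy
          have := hG2 B' n hxB
          rw [Set.eq_empty_iff_forall_notMem] at this
          exact this y ⟨hmono hy.1, hy.2⟩
      rcases hA B' with hfin | hfin
      · -- A ∩ {n | x n ∈ B} finite : contradiction with hinf
        exfalso
        apply hinf
        have hsub : {m : ℕ | (b (e m) (g (e m)) ∩ B).Nonempty} ⊆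
            {m : ℕ | m < N} ∪ (⇑e) ⁻¹' (A ∩ {n : ℕ | x n ∈ B}) := by
          intro m hm
          by_cases hmN : m < N
          · exact Or.inl hmN
          · right
            have hemN : e m ≥ N := le_trans (by omega) (hem m)
            have hxB : x (e m) ∈ B := by
              by_contra hxB
              have := (hgood (e m) hemN).2 hxB
              rw [Set.mem_setOf_eq, this] at hm
              exact Set.not_nonempty_empty hm
            exact ⟨heA m, hxB⟩
        exact ((Set.finite_Iio N).union (hfin.preimage e.injective.injOn)).subset hsub
      · -- A \ {n | x n ∈ B} finite : get tail containment
        obtain ⟨k₁, hk₁⟩ := finite_bound (hfin.preimage (f := ⇑e) e.injective.injOn)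
        refine ⟨max k₁ N, fun m hm => ?_⟩
        have hm1 : m ≥ k₁ := le_trans (le_max_left _ _) hm
        have hm2 : e m ≥ N := le_trans (le_trans (le_max_right _ _) hm) (hem m)
        have hxB : x (e m) ∈ B := by
          by_contra hxB
          exact hk₁ m hm1 ⟨heA m, hxB⟩
        exact (hgood (e m) hm2).1 hxB
end

section
/- ω₁ = 𝔠 holds if and only if every first-countable Tychonoff space of weight < 𝔠 embeds into a Hausdorff first-countable compact space. -/
open Cardinal Set Filter Topology TopologicalSpace

/-! Under CH a space of weight `< 𝔠` has a countable base, so by Urysohn's metrization theorem it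
embeds into the Hilbert cube. If `ℵ₁ < 𝔠`, the space `ω₁` of countable ordinals is first countable
of weight `ℵ₁`. Every sequence in `ω₁` lies in a compact initial segment, so the image of `ω₁` under
an embedding into a first-countable compact Hausdorff space would be sequentially closed, hence
closed, and `ω₁` would be compact; but it has no largest element. -/

universe u

theorem aleph_one_eq_continuum_iff_univ_zero :
    aleph.{u} 1 = continuum.{u} ↔ aleph.{0} 1 = continuum.{0} := by
  rw [← lift_inj.{0, u}, lift_aleph, lift_continuum, Ordinal.lift_one]

section Weight

variable (X : Type u) [TopologicalSpace X]

theorem exists_isTopologicalBasis_mk_eq_wt :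
    ∃ B : Set (Set X), IsTopologicalBasis B ∧ #B = wt X :=
  csInf_mem (s := {c | ∃ B : Set (Set X), IsTopologicalBasis B ∧ #B = c})
    ⟨_, _, isTopologicalBasis_opens, rfl⟩

theorem secondCountableTopology_of_wt_lt_aleph_one (h : wt X < ℵ₁) :
    SecondCountableTopology X := by
  obtain ⟨B, hB, hcard⟩ := exists_isTopologicalBasis_mk_eq_wt X
  exact hB.secondCountableTopology
    (le_aleph0_iff_set_countable.1 (lt_aleph_one_iff.1 (hcard ▸ h)))

theorem wt_le_mk_mul_aleph0 [FirstCountableTopology X] : wt X ≤ #X * ℵ₀ := by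
  choose U hU using fun x : X => (𝓝 x).exists_antitone_basis
  let B : Set (Set X) := range fun p : X × ℕ => interior (U p.1 p.2)
  have hB : IsTopologicalBasis B := by
    refine isTopologicalBasis_of_isOpen_of_nhds (by rintro _ ⟨p, rfl⟩; exact isOpen_interior)
      fun x u hxu hu => ?_
    obtain ⟨n, hn⟩ := (hU x).mem_iff.1 (hu.mem_nhds hxu)
    exact ⟨_, ⟨(x, n), rfl⟩, mem_interior_iff_mem_nhds.2 ((hU x).mem n),
      interior_subset.trans hn⟩
  calc wt X ≤ #B := csInf_le' ⟨B, hB, rfl⟩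
    _ ≤ #(X × ℕ) := mk_range_le
    _ = #X * ℵ₀ := by simp

end Weight

theorem SuccOrder.firstCountableTopology_of_countable_Iio {α : Type*} [LinearOrder α]
    [TopologicalSpace α] [OrderTopology α] [SuccOrder α] (h : ∀ a : α, (Iio a).Countable) :
    FirstCountableTopology α := by
  refine ⟨fun a => ?_⟩
  by_cases ha : IsMin a
  · rw [← SuccOrder.nhdsLE_eq_nhds, ha.Iic_eq, nhdsWithin_singleton]
    infer_instance
  · exact HasCountableBasis.isCountablyGenerated
      ⟨SuccOrder.hasBasis_nhds_Ioc_of_exists_lt (not_isMin_iff.1 ha), h a⟩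

theorem WellFoundedLT.isCompact_Iic {α : Type*} [LinearOrder α] [WellFoundedLT α]
    [TopologicalSpace α] [OrderTopology α] (b : α) : IsCompact (Iic b) := by
  have : Nonempty α := ⟨b⟩
  let := WellFoundedLT.toOrderBot α
  let := WellFoundedLT.conditionallyCompleteLinearOrderBot α
  rw [← Icc_bot]
  exact CompactIccSpace.isCompact_Icc

theorem noncompactSpace_of_noMaxOrder (α : Type*) [LinearOrder α] [TopologicalSpace α]
    [ClosedIciTopology α] [NoMaxOrder α] [Nonempty α] : NoncompactSpace α := by
  refine ⟨fun h => ?_⟩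
  obtain ⟨a, -, ha⟩ := h.exists_isGreatest univ_nonempty
  obtain ⟨b, hb⟩ := exists_gt a
  exact (ha (mem_univ b)).not_gt hb

theorem Set.Countable.bddAbove_of_countable_Iio {α : Type*} [LinearOrder α] [Uncountable α]
    {s : Set α} (hs : s.Countable) (hIio : ∀ a : α, (Iio a).Countable) : BddAbove s := by
  by_contra h
  have : (univ : Set α) ⊆ ⋃ b ∈ s, Iio b := fun a _ => by
    obtain ⟨b, hb, hab⟩ := not_bddAbove_iff.1 h a
    exact mem_biUnion hb hab
  exact not_countable_univ ((hs.biUnion fun b _ => hIio b).mono this)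

theorem isClosed_range_of_forall_seq_subset_isCompact {X Y : Type*} [TopologicalSpace X]
    [TopologicalSpace Y] [T2Space Y] [FrechetUrysohnSpace Y]
    (hX : ∀ x : ℕ → X, ∃ K, IsCompact K ∧ range x ⊆ K) {e : X → Y} (he : Continuous e) :
    IsClosed (range e) := by
  refine isClosed_of_closure_subset fun y hy => ?_
  obtain ⟨z, hz, hzy⟩ := mem_closure_iff_seq_limit.1 hy
  choose x hx using hz
  obtain ⟨K, hK, hxK⟩ := hX x
  have hyK : y ∈ e '' K := ((hK.image he).isClosed).mem_of_tendsto hzy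
    (Eventually.of_forall fun n => hx n ▸ mem_image_of_mem e (hxK (mem_range_self n)))
  exact image_subset_range e K hyK

theorem not_isEmbedding_of_forall_seq_subset_isCompact {X Y : Type*} [TopologicalSpace X]
    [NoncompactSpace X] [TopologicalSpace Y] [CompactSpace Y] [T2Space Y] [FrechetUrysohnSpace Y]
    (hX : ∀ x : ℕ → X, ∃ K, IsCompact K ∧ range x ⊆ K) {e : X → Y} : ¬ IsEmbedding e := by
  intro he
  have := (isClosed_range_of_forall_seq_subset_isCompact hX he.continuous).isCompact
  rw [← image_univ, ← he.isCompact_iff] at this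
  exact noncompact_univ X this

noncomputable abbrev CountableOrdinals : Type := (aleph 1).ord.ToType

namespace CountableOrdinals

noncomputable instance : TopologicalSpace CountableOrdinals := Preorder.topology _

instance : OrderTopology CountableOrdinals := ⟨rfl⟩

theorem mk_eq_aleph_one : #CountableOrdinals = ℵ₁ := mk_ord_toType _

instance : Uncountable CountableOrdinals := by
  rw [← aleph0_lt_mk_iff, mk_eq_aleph_one]
  exact aleph0_lt_aleph_one

instance : NoMaxOrder CountableOrdinals := noMaxOrder (aleph0_le_aleph 1)

instance : NoncompactSpace CountableOrdinals := noncompactSpace_of_noMaxOrder _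

theorem countable_Iio (a : CountableOrdinals) : (Iio a).Countable := by
  have := mk_Iio_lt a (by rw [mk_eq_aleph_one, Ordinal.type_toType])
  rw [mk_eq_aleph_one] at this
  exact le_aleph0_iff_set_countable.1 (lt_aleph_one_iff.1 this)

instance : FirstCountableTopology CountableOrdinals :=
  SuccOrder.firstCountableTopology_of_countable_Iio countable_Iio

theorem exists_isCompact_superset_range (x : ℕ → CountableOrdinals) :
    ∃ K, IsCompact K ∧ range x ⊆ K := by
  obtain ⟨b, hb⟩ := (countable_range x).bddAbove_of_countable_Iio countable_Iio
  exact ⟨Iic b, WellFoundedLT.isCompact_Iic b, hb⟩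

theorem wt_le_aleph_one : wt CountableOrdinals ≤ ℵ₁ := by
  simpa [mk_eq_aleph_one] using wt_le_mk_mul_aleph0 CountableOrdinals

end CountableOrdinals

/-- `ω₁ = 𝔠` iff every first-countable Tychonoff space of weight `< 𝔠`
embeds into a Hausdorff first-countable compact space. -/
theorem stmt_12 :
    aleph 1 = Cardinal.continuum ↔
    ∀ (X : Type) [TopologicalSpace X] [T35Space X] [FirstCountableTopology X],
      wt X < Cardinal.continuum →
      ∃ (Y : Type) (_ : TopologicalSpace Y),
        T2Space Y ∧ FirstCountableTopology Y ∧ CompactSpace Y ∧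
        ∃ f : X → Y, IsEmbedding f := by
  rw [aleph_one_eq_continuum_iff_univ_zero]
  constructor
  · intro hCH X _ _ _ hwt
    have := secondCountableTopology_of_wt_lt_aleph_one X (hCH ▸ hwt)
    let := metrizableSpaceMetric X
    obtain ⟨f, hf⟩ := Metric.PiNatEmbed.exists_embedding_to_hilbert_cube (X := X)
    exact ⟨ℕ → unitInterval, inferInstance, inferInstance, inferInstance, inferInstance, f, hf⟩
  · intro h
    by_contra hCH
    have hwt : wt CountableOrdinals < 𝔠 :=
      CountableOrdinals.wt_le_aleph_one.trans_lt (aleph_one_le_continuum.lt_of_ne hCH)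
    obtain ⟨Y, _, _, _, _, e, he⟩ := h CountableOrdinals hwt
    exact not_isEmbedding_of_forall_seq_subset_isCompact
      CountableOrdinals.exists_isCompact_superset_range he
end

section
/- Every regular first-countable space whose Lindelöf number is strictly less than 𝔟 is pseudonormal. -/
open Cardinal Set Filter Topology TopologicalSpace

/-- every regular first-countable space of Lindelöf number `< 𝔟`
is pseudonormal. -/
theorem stmt_14 (X : Type) [TopologicalSpace X] [T3Space X]
    [FirstCountableTopology X]
    (h : ∃ κ : Cardinal, κ < bNum ∧ ∀ U : Set (Set X), (∀ u ∈ U, IsOpen u) →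
      ⋃₀ U = Set.univ → ∃ V ⊆ U, #V ≤ κ ∧ ⋃₀ V = Set.univ) :
    Pseudonormal X := by
  classical
  obtain ⟨κ, hκ, hLin⟩ := h
  intro F₀ F₁ hF₀c hF₁c hF₀ctble hdisj
  -- regularity helper
  have reg : ∀ (x0 : X) (C : Set X), IsClosed C → x0 ∉ C →
      ∃ W : Set X, IsOpen W ∧ x0 ∈ W ∧ Disjoint (closure W) C := by
    intro x0 C hC hx0
    obtain ⟨s, ⟨hs1, hs2⟩, hs3⟩ := (closed_nhds_basis x0).mem_iff.1
      (hC.isOpen_compl.mem_nhds hx0)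
    refine ⟨interior s, isOpen_interior, mem_interior_iff_mem_nhds.2 hs1,
      Set.disjoint_left.2 fun p hp hpC => ?_⟩
    exact hs3 ((closure_minimal interior_subset hs2) hp) hpC
  rcases F₀.eq_empty_or_nonempty with rfl | hne
  · exact ⟨∅, Set.univ, isOpen_empty, isOpen_univ, by simp, Set.subset_univ _, by simp⟩
  obtain ⟨x, rfl⟩ := hF₀ctble.exists_eq_range hne
  -- W n : open nbhd of x n with closure disjoint from F₁
  have hx1 : ∀ n : ℕ, ∃ W : Set X, IsOpen W ∧ x n ∈ W ∧ Disjoint (closure W) F₁ := by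
    intro n
    have hxn : x n ∉ F₁ := fun hmem =>
      Set.disjoint_left.1 hdisj (Set.mem_range_self n) hmem
    exact reg (x n) F₁ hF₁c hxn
  choose W hWopen hWmem hWdisj using hx1
  -- antitone neighborhood bases
  have hb : ∀ n : ℕ, ∃ s : ℕ → Set X, (𝓝 (x n)).HasAntitoneBasis s := fun n =>
    (𝓝 (x n)).exists_antitone_basis
  choose s hs using hb
  set B : ℕ → ℕ → Set X := fun n k => interior (s n k) ∩ W n with hB
  have hBopen : ∀ n k, IsOpen (B n k) := fun n k => isOpen_interior.inter (hWopen n)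
  have hBmem : ∀ n k, x n ∈ B n k := fun n k =>
    ⟨mem_interior_iff_mem_nhds.2 ((hs n).1.mem_of_mem trivial), hWmem n⟩
  have hBanti : ∀ n, ∀ {k l : ℕ}, k ≤ l → B n l ⊆ B n k := by
    intro n k l hkl
    exact Set.inter_subset_inter_left _ (interior_mono ((hs n).2 hkl))
  have hBcl : ∀ n k, Disjoint (closure (B n k)) F₁ := fun n k =>
    (hWdisj n).mono_left (closure_mono Set.inter_subset_right)
  have hBfind : ∀ (w : Set X), Disjoint (closure w) (Set.range x) →
      ∀ n, ∃ k, B n k ∩ w = ∅ := by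
    intro w hw n
    have hxn : x n ∈ (closure w)ᶜ :=
      fun hc => Set.disjoint_left.1 hw hc (Set.mem_range_self n)
    have hnb : (closure w)ᶜ ∈ 𝓝 (x n) := isClosed_closure.isOpen_compl.mem_nhds hxn
    obtain ⟨k, -, hk⟩ := (hs n).1.mem_iff.1 hnb
    refine ⟨k, Set.eq_empty_iff_forall_notMem.2 fun p hp => ?_⟩
    exact hk (interior_subset hp.1.1) (subset_closure hp.2)
  -- pick V z for each z ∈ F₁
  have hV : ∀ z, z ∈ F₁ → ∃ Vz : Set X, IsOpen Vz ∧ z ∈ Vz ∧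
      Disjoint (closure Vz) (Set.range x) := by
    intro z hz
    have hzx : z ∉ Set.range x := fun hc => Set.disjoint_left.1 hdisj hc hz
    exact reg z (Set.range x) hF₀c hzx
  choose! V hVopen hVmem hVdisj using hV
  -- the open cover
  set U : Set (Set X) := insert F₁ᶜ (V '' F₁) with hU
  have hUopen : ∀ u ∈ U, IsOpen u := by
    rintro u (rfl | ⟨z, hz, rfl⟩)
    · exact hF₁c.isOpen_compl
    · exact hVopen z hz
  have hUcov : ⋃₀ U = Set.univ := by
    apply Set.eq_univ_of_forall
    intro p
    by_cases hp : p ∈ F₁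
    · exact ⟨V p, Set.mem_insert_of_mem _ ⟨p, hp, rfl⟩, hVmem p hp⟩
    · exact ⟨F₁ᶜ, Set.mem_insert _ _, hp⟩
  obtain ⟨𝒱, h𝒱U, h𝒱card, h𝒱cov⟩ := hLin U hUopen hUcov
  set 𝒲 : Set (Set X) := 𝒱 ∩ (V '' F₁) with h𝒲
  have h𝒲prop : ∀ w ∈ 𝒲, IsOpen w ∧ Disjoint (closure w) (Set.range x) := by
    rintro w ⟨-, z, hz, rfl⟩
    exact ⟨hVopen z hz, hVdisj z hz⟩
  -- the functions
  have key : ∀ w ∈ 𝒲, ∀ n : ℕ, ∃ k, B n k ∩ w = ∅ := fun w hw n =>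
    hBfind w (h𝒲prop w hw).2 n
  choose! f hf using key
  -- the family is bounded
  have hbdd : ∃ g : ℕ → ℕ, ∀ h' ∈ f '' 𝒲, evLE h' g := by
    by_contra hcon
    push_neg at hcon
    have hunb : IsUnboundedFamily (f '' 𝒲) := by
      intro g
      obtain ⟨h', hh', hh2⟩ := hcon g
      exact ⟨h', hh', hh2⟩
    have h1 : bNum ≤ #(f '' 𝒲) := csInf_le' ⟨f '' 𝒲, hunb, rfl⟩
    have h2 : #(f '' 𝒲) ≤ #𝒲 := Cardinal.mk_image_le
    have h3 : #(𝒲 : Set (Set X)) ≤ #𝒱 :=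
      Cardinal.mk_le_mk_of_subset Set.inter_subset_left
    exact absurd ((h1.trans (h2.trans (h3.trans h𝒱card)))) (not_le.2 hκ)
  obtain ⟨g, hg⟩ := hbdd
  have hgw : ∀ w ∈ 𝒲, {n : ℕ | g n < f w n}.Finite := fun w hw =>
    hg (f w) ⟨w, hw, rfl⟩
  -- the separating open sets
  refine ⟨⋃ n, B n (g n),
    ⋃ w ∈ 𝒲, (w \ ⋃ n ∈ {m : ℕ | g m < f w m}, closure (B n (g n))),
    isOpen_iUnion fun n => hBopen n (g n), ?_, ?_, ?_, ?_⟩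
  · refine isOpen_biUnion fun w hw => (h𝒲prop w hw).1.sdiff ?_
    exact (hgw w hw).isClosed_biUnion fun n _ => isClosed_closure
  · rintro p ⟨n, rfl⟩
    exact Set.mem_iUnion.2 ⟨n, hBmem n (g n)⟩
  · intro z hz
    have hzcov : z ∈ ⋃₀ 𝒱 := h𝒱cov ▸ Set.mem_univ z
    obtain ⟨v, hv𝒱, hzv⟩ := hzcov
    have hv𝒲 : v ∈ 𝒲 := by
      refine ⟨hv𝒱, ?_⟩
      rcases h𝒱U hv𝒱 with rfl | hvV
      · exact absurd hz hzv
      · exact hvV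
    refine Set.mem_biUnion hv𝒲 ⟨hzv, ?_⟩
    intro hcz
    obtain ⟨n, -, hn⟩ := Set.mem_iUnion₂.1 hcz
    exact Set.disjoint_left.1 (hBcl n (g n)) hn hz
  · rw [Set.disjoint_left]
    rintro p hp0 hp1
    obtain ⟨n, hpn⟩ := Set.mem_iUnion.1 hp0
    obtain ⟨w, hw, hpw'⟩ := Set.mem_iUnion₂.1 hp1
    obtain ⟨hpw, hpnot⟩ := hpw'
    by_cases hE : g n < f w n
    · exact hpnot (Set.mem_biUnion hE (subset_closure hpn))
    · have hle : f w n ≤ g n := not_lt.1 hE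
      have : p ∈ B n (f w n) := hBanti n hle hpn
      have hempty := hf w hw n
      exact absurd (Set.mem_inter this hpw) (by rw [hempty]; exact Set.notMem_empty p)
end

section
/- Every pseudonormal topological space has Property D: every countable closed discrete subspace D admits an expansion to a discrete family of open sets, i.e., there are open sets {A_d : d ∈ D} with d ∈ A_d, A_d ∩ D = {d}, and the family {A_d} is discrete. -/
open Cardinal Set Filter Topology TopologicalSpace

/-- every pseudonormal space has Property D. -/
theorem stmt_15 (X : Type*) [TopologicalSpace X] (h : Pseudonormal X)
    (D : Set X) (hDctble : D.Countable) (hDclosed : IsClosed D)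
    (hDdisc : DiscreteTopology D) :
    ∃ A : D → Set X, (∀ d, IsOpen (A d)) ∧ (∀ d, (d : X) ∈ A d) ∧
      (∀ d, A d ∩ D = {(d : X)}) ∧
      ∀ x : X, ∃ V ∈ 𝓝 x, {d : D | (V ∩ A d).Nonempty}.Subsingleton := by
  classical
  haveI : Countable ↥D := hDctble.to_subtype
  obtain ⟨e, he⟩ := exists_injective_nat ↥D
  have hemb : IsClosedEmbedding (Subtype.val : D → X) :=
    hDclosed.isClosedEmbedding_subtypeVal
  have hclosed : ∀ s : Set ↥D, IsClosed (Subtype.val '' s) := fun s =>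
    hemb.isClosedMap _ (isClosed_discrete s)
  -- Step A: separate each d from D \ {d}
  have step1 : ∀ d : D, ∃ G H : Set X, IsOpen G ∧ IsOpen H ∧ (d : X) ∈ G ∧
      (Subtype.val '' ({d}ᶜ : Set ↥D)) ⊆ H ∧ Disjoint G H := by
    intro d
    have h1 : IsClosed ({(d : X)} : Set X) := by
      have := hclosed {d}
      simpa using this
    have h2 : IsClosed (Subtype.val '' ({d}ᶜ : Set ↥D)) := hclosed _
    have h3 : ({(d : X)} : Set X).Countable := Set.countable_singleton _
    have h4 : Disjoint ({(d : X)} : Set X) (Subtype.val '' ({d}ᶜ : Set ↥D)) := by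
      rw [Set.disjoint_left]
      rintro x hx ⟨d', hd', rfl⟩
      exact hd' (Subtype.coe_injective (by simpa using hx))
    obtain ⟨G, H, hG, hH, hdG, hDH, hGH⟩ := h ({(d : X)}) _ h1 h2 h3 h4
    exact ⟨G, H, hG, hH, hdG rfl, hDH, hGH⟩
  choose G H hGopen hHopen hdG hDH hGH using step1
  set U : D → Set X := fun d => G d ∩ ⋂ d' ∈ {d' : D | e d' < e d}, H d' with hU
  have hfin : ∀ d : D, {d' : D | e d' < e d}.Finite := fun d =>
    (Set.finite_Iio (e d)).preimage he.injOn
  have hUopen : ∀ d, IsOpen (U d) := fun d =>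
    (hGopen d).inter ((hfin d).isOpen_biInter fun d' _ => hHopen d')
  have hmemH : ∀ d d' : D, d ≠ d' → (d : X) ∈ H d' := fun d d' hne =>
    hDH d' ⟨d, by simpa using hne, rfl⟩
  have hdU : ∀ d : D, (d : X) ∈ U d := by
    intro d
    refine ⟨hdG d, ?_⟩
    simp only [Set.mem_iInter]
    intro d' hd'
    exact hmemH d d' (fun h => by simp [h] at hd')
  have hUsub : ∀ d d' : D, e d' < e d → U d ⊆ H d' := fun d d' hlt x hx =>
    Set.mem_iInter₂.mp hx.2 d' hlt
  have hUdisj : ∀ d d' : D, d ≠ d' → Disjoint (U d) (U d') := by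
    intro d d' hne
    rcases lt_or_gt_of_ne (fun h => hne (he h)) with hlt | hlt
    · exact Set.disjoint_left.mpr fun x hx hx' =>
        Set.disjoint_left.mp (hGH d) hx.1 (hUsub d' d hlt hx')
    · exact Set.disjoint_left.mpr fun x hx hx' =>
        Set.disjoint_left.mp (hGH d') hx'.1 (hUsub d d' hlt hx)
  have hUD : ∀ d : D, U d ∩ D = {(d : X)} := by
    intro d
    apply Set.Subset.antisymm
    · rintro x ⟨hxU, hxD⟩
      by_contra hne
      have : x ∈ H d := hDH d ⟨⟨x, hxD⟩, fun hc => hne (congrArg Subtype.val hc), rfl⟩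
      exact Set.disjoint_left.mp (hGH d) hxU.1 this
    · rintro x rfl
      exact ⟨hdU d, d.2⟩
  -- Step B: separate D from the complement of the union
  have hCclosed : IsClosed (⋃ d, U d)ᶜ := (isOpen_iUnion hUopen).isClosed_compl
  have hDsubW : D ⊆ ⋃ d, U d := fun x hx => Set.mem_iUnion.mpr ⟨⟨x, hx⟩, hdU ⟨x, hx⟩⟩
  obtain ⟨G', H', hG', hH', hDG', hCH', hGH'⟩ :=
    h D (⋃ d, U d)ᶜ hDclosed hCclosed hDctble
      (Set.disjoint_left.mpr fun x hx hx' => hx' (hDsubW hx))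
  refine ⟨fun d => U d ∩ G', fun d => (hUopen d).inter hG', fun d => ⟨hdU d, hDG' d.2⟩,
    fun d => ?_, fun x => ?_⟩
  · apply Set.Subset.antisymm
    · rintro x ⟨⟨hxU, _⟩, hxD⟩
      rw [← hUD d]; exact ⟨hxU, hxD⟩
    · rintro x rfl
      exact ⟨⟨hdU d, hDG' d.2⟩, d.2⟩
  · by_cases hx : x ∈ ⋃ d, U d
    · obtain ⟨d₀, hd₀⟩ := Set.mem_iUnion.mp hx
      refine ⟨U d₀, (hUopen d₀).mem_nhds hd₀, ?_⟩
      intro a ha b hb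
      have key : ∀ c : D, (U d₀ ∩ (U c ∩ G')).Nonempty → c = d₀ := by
        intro c ⟨y, hy⟩
        by_contra hne
        exact Set.disjoint_left.mp (hUdisj d₀ c (Ne.symm hne)) hy.1 hy.2.1
      rw [key a ha, key b hb]
    · refine ⟨H', hH'.mem_nhds (hCH' hx), ?_⟩
      intro a ⟨y, hy⟩
      exact absurd hy.2.2 (fun hyG => Set.disjoint_left.mp hGH' hyG hy.1)
end

section
/- Let Z be a first-countable regular feebly compact space and suppose {Q_n : n ∈ ω} is a family of countably infinite discrete open subsets of Z, with enumerations Q_n = {q(n,k) : k ∈ ω}. Then there are an infinite set A ⊆ ω and points z_n ∈ Z such that for each n the sequence {q(n,k) : k ∈ A} converges to z_n. -/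
open Cardinal Set Filter Topology TopologicalSpace

/-- In a feebly compact space, a sequence of distinct points with open singletons
clusters at some point. -/
lemma exists_cluster {Z : Type*} [TopologicalSpace Z] (hfc : FeeblyCompact Z)
    (f : ℕ → Z) (hinjf : Function.Injective f)
    (hsing : ∀ k, IsOpen ({f k} : Set Z)) (B : Set ℕ) (hB : B.Infinite) :
    ∃ z : Z, ∀ t ∈ 𝓝 z, {k ∈ B | f k ∈ t}.Infinite := by
  by_contra h
  push_neg at h
  set F : Set (Set Z) := (fun k => ({f k} : Set Z)) '' B with hF
  have hinj2 : Function.Injective (fun k => ({f k} : Set Z)) := by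
    intro a b hab
    exact hinjf (Set.singleton_eq_singleton_iff.mp hab)
  have hFinf : F.Infinite := hB.image hinj2.injOn
  have hFfin : F.Finite := by
    apply hfc F
    · rintro u ⟨k, _, rfl⟩
      exact ⟨hsing k, Set.singleton_nonempty _⟩
    · intro x
      obtain ⟨t, ht, hfin⟩ := h x
      refine ⟨t, ht, ?_⟩
      have hS : {u ∈ F | (u ∩ t).Nonempty}.Finite := by
        apply Set.Finite.subset (hfin.image (fun k => ({f k} : Set Z)))
        rintro u ⟨⟨k, hk, rfl⟩, hne⟩
        refine ⟨k, ⟨hk, ?_⟩, rfl⟩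
        obtain ⟨y, hy1, hy2⟩ := hne
        rwa [Set.mem_singleton_iff.mp hy1] at hy2
      have : {u : F | ((u : Set Z) ∩ t).Nonempty} =
          Subtype.val ⁻¹' {u ∈ F | (u ∩ t).Nonempty} := by
        ext u; simp [u.2]
      rw [this]
      exact hS.preimage Subtype.val_injective.injOn
  exact hFinf hFfin

/-- From a cluster point, extract a convergent subsequence indexed by an infinite subset. -/
lemma exists_conv_subset {Z : Type*} [TopologicalSpace Z] [FirstCountableTopology Z]
    (f : ℕ → Z) {B : Set ℕ} {z : Z}
    (hz : ∀ t ∈ 𝓝 z, {k ∈ B | f k ∈ t}.Infinite) :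
    ∃ B' : Set ℕ, B' ⊆ B ∧ B'.Infinite ∧
      Filter.Tendsto f (Filter.atTop ⊓ Filter.principal B') (𝓝 z) := by
  obtain ⟨U, hU⟩ := (𝓝 z).exists_antitone_basis
  have hstep : ∀ (m : ℕ) (c : ℕ), ∃ j, j ∈ B ∧ f j ∈ U m ∧ c < j := by
    intro m c
    obtain ⟨j, hj, hjc⟩ := (hz (U m) (hU.mem m)).exists_gt c
    exact ⟨j, hj.1, hj.2, hjc⟩
  let g : ℕ → ℕ := fun m => Nat.rec (Classical.choose (hstep 0 0))
    (fun m prev => Classical.choose (hstep (m + 1) prev)) m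
  have hspec : ∀ m, g m ∈ B ∧ f (g m) ∈ U m ∧ (∀ m', m = m' + 1 → g m' < g m) := by
    intro m
    cases m with
    | zero =>
      obtain ⟨h1, h2, _⟩ := Classical.choose_spec (hstep 0 0)
      exact ⟨h1, h2, fun m' hm' => by omega⟩
    | succ m =>
      obtain ⟨h1, h2, h3⟩ := Classical.choose_spec (hstep (m + 1) (g m))
      exact ⟨h1, h2, fun m' hm' => by rw [Nat.succ_injective hm'] at h3 ⊢; exact h3⟩
  have hmono : StrictMono g := strictMono_nat_of_lt_succ fun m => (hspec (m + 1)).2.2 m rfl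
  refine ⟨Set.range g, ?_, Set.infinite_range_of_injective hmono.injective, ?_⟩
  · rintro _ ⟨m, rfl⟩; exact (hspec m).1
  · intro s hs
    obtain ⟨m, hm⟩ := hU.mem_iff.mp hs
    rw [Filter.mem_map, Filter.mem_inf_principal]
    filter_upwards [Filter.eventually_ge_atTop (g m)] with j hj hjr
    obtain ⟨i, rfl⟩ := hjr
    have : m ≤ i := by
      by_contra hc
      exact absurd hj (not_le.mpr (hmono (not_le.mp hc)))
    exact hm (hU.antitone this (hspec i).2.1)

/-- the diagonal argument in a first-countable regular feebly compact
space: given countably many countably infinite discrete open subsets, there is a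
decreasing sequence of infinite sets, a pseudointersection `A` of them, and limit
points `z n` such that each `Q n` restricted to `A` converges to `z n`. -/
theorem stmt_17 (Z : Type*) [TopologicalSpace Z] [T3Space Z]
    [FirstCountableTopology Z] (hfc : FeeblyCompact Z)
    (q : ℕ → ℕ → Z) (hinj : ∀ n, Function.Injective (q n))
    (hopen : ∀ n, IsOpen (Set.range (q n)))
    (hdisc : ∀ n, DiscreteTopology (Set.range (q n))) :
    ∃ As : ℕ → Set ℕ, (∀ n, (As n).Infinite) ∧ (∀ n, As (n + 1) ⊆ As n) ∧
      ∃ A : Set ℕ, A.Infinite ∧ (∀ n, (A \ As n).Finite) ∧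
        ∀ n, ∃ z : Z,
          Filter.Tendsto (q n) (Filter.atTop ⊓ Filter.principal A) (𝓝 z) := by
  have hsing : ∀ n k, IsOpen ({q n k} : Set Z) := by
    intro n k
    have h1 : IsOpen (Subtype.val '' ({⟨q n k, Set.mem_range_self k⟩} :
        Set (Set.range (q n)))) :=
      ((hopen n).isOpenEmbedding_subtypeVal).isOpenMap _ (isOpen_discrete _)
    rwa [Set.image_singleton] at h1
  have key : ∀ (n : ℕ) (B : Set ℕ), B.Infinite → ∃ B' : Set ℕ, B' ⊆ B ∧ B'.Infinite ∧
      ∃ z : Z, Filter.Tendsto (q n) (Filter.atTop ⊓ Filter.principal B') (𝓝 z) := by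
    intro n B hB
    obtain ⟨z, hz⟩ := exists_cluster hfc (q n) (hinj n) (hsing n) B hB
    obtain ⟨B', h1, h2, h3⟩ := exists_conv_subset (q n) hz
    exact ⟨B', h1, h2, z, h3⟩
  -- build the decreasing sequence
  let P : ℕ → {B : Set ℕ // B.Infinite} := fun n => Nat.rec
    ⟨Classical.choose (key 0 Set.univ Set.infinite_univ),
      (Classical.choose_spec (key 0 Set.univ Set.infinite_univ)).2.1⟩
    (fun n prev => ⟨Classical.choose (key (n + 1) prev.1 prev.2),
      (Classical.choose_spec (key (n + 1) prev.1 prev.2)).2.1⟩) n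
  set As : ℕ → Set ℕ := fun n => (P n).1 with hAs
  have hinfA : ∀ n, (As n).Infinite := fun n => (P n).2
  have hdec : ∀ n, As (n + 1) ⊆ As n := fun n =>
    (Classical.choose_spec (key (n + 1) (P n).1 (P n).2)).1
  have hconv : ∀ n, ∃ z : Z,
      Filter.Tendsto (q n) (Filter.atTop ⊓ Filter.principal (As n)) (𝓝 z) := by
    intro n
    cases n with
    | zero => exact (Classical.choose_spec (key 0 Set.univ Set.infinite_univ)).2.2
    | succ n => exact (Classical.choose_spec (key (n + 1) (P n).1 (P n).2)).2.2
  have hchain : ∀ {n m : ℕ}, n ≤ m → As m ⊆ As n := by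
    intro n m hnm
    induction m with
    | zero => rw [Nat.le_zero.mp hnm]
    | succ m ih =>
      rcases Nat.le_succ_iff_eq_or_le.mp hnm with h | h
      · rw [h]
      · exact (ih h).trans' (hdec m)
  -- build the pseudointersection
  have hstep : ∀ (m : ℕ) (c : ℕ), ∃ j, j ∈ As m ∧ c < j := by
    intro m c
    obtain ⟨j, hj, hjc⟩ := (hinfA m).exists_gt c
    exact ⟨j, hj, hjc⟩
  let a : ℕ → ℕ := fun m => Nat.rec (Classical.choose (hstep 0 0))
    (fun m prev => Classical.choose (hstep (m + 1) prev)) m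
  have haspec : ∀ m, a m ∈ As m ∧ (∀ m', m = m' + 1 → a m' < a m) := by
    intro m
    cases m with
    | zero =>
      obtain ⟨h1, _⟩ := Classical.choose_spec (hstep 0 0)
      exact ⟨h1, fun m' hm' => by omega⟩
    | succ m =>
      obtain ⟨h1, h2⟩ := Classical.choose_spec (hstep (m + 1) (a m))
      exact ⟨h1, fun m' hm' => by rw [Nat.succ_injective hm'] at h2 ⊢; exact h2⟩
  have hamono : StrictMono a := strictMono_nat_of_lt_succ fun m => (haspec (m + 1)).2 m rfl
  refine ⟨As, hinfA, hdec, Set.range a,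
    Set.infinite_range_of_injective hamono.injective, ?_, ?_⟩
  · intro n
    apply Set.Finite.subset ((Set.finite_Iio n).image a)
    rintro _ ⟨⟨m, rfl⟩, hnot⟩
    refine ⟨m, ?_, rfl⟩
    by_contra hc
    exact hnot (hchain (not_lt.mp hc) (haspec m).1)
  · intro n
    obtain ⟨z, hz⟩ := hconv n
    refine ⟨z, hz.mono_left (le_inf inf_le_left ?_)⟩
    rw [Filter.le_principal_iff, Filter.mem_inf_principal]
    filter_upwards [Filter.eventually_ge_atTop (a n)] with j hj hjr
    obtain ⟨m, rfl⟩ := hjr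
    have : n ≤ m := by
      by_contra hc
      exact absurd hj (not_le.mpr (hamono (not_le.mp hc)))
    exact hchain this (haspec m).1
end
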